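/- If G is a connected finite simple graph and H is a proper spanning subgraph of G (same vertex set, strictly fewer edges), then G \succ H, i.e., m(H, x) > m(G, x) for all real x \ge t(G); in particular t(H) < t(G). -/

import Mathlib

open Polynomial

/-- Number of matchings with exactly `k` edges in `G`. -/
noncomputable def matchingCount {V : Type*} [Fintype V] (G : SimpleGraph V) (k : ℕ) : ℕ :=
  Nat.card {s : Finset (Sym2 V) // s.card = k ∧ (∀ e ∈ s, e ∈ G.edgeSet) ∧
    ∀ e ∈ s, ∀ f ∈ s, e ≠ f → ∀ x : V, x ∈ e → x ∉ f}

/-- The matching polynomial `m(G,x) = ∑ (-1)^k m_k(G) x^(n-2k)`. -/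
noncomputable def matchPoly {V : Type*} [Fintype V] (G : SimpleGraph V) : Polynomial ℝ :=
  ∑ k ∈ Finset.range (Fintype.card V + 1),
    Polynomial.C ((-1 : ℝ) ^ k * (matchingCount G k : ℝ)) *
      Polynomial.X ^ (Fintype.card V - 2 * k)

/-- The maximum real root `t(G)` of the matching polynomial. -/
noncomputable def maxRoot {V : Type*} [Fintype V] (G : SimpleGraph V) : ℝ :=
  sSup {x : ℝ | (matchPoly G).eval x = 0}

/-!
Write `m(G[W], x)` for the matching polynomial of the subgraph induced on a vertex set `W`, and
`t(G[W])` for its largest root. The vertex recursion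
`m(G[W]) = x m(G[W - u]) - ∑_{v ∼ u} m(G[W - u - v])` gives, by induction on `W`, that
`t(G[W - u]) ≤ t(G[W])`; for connected `G[W]` with two or more vertices it even gives
`m(G[W - u], t(G[W])) > 0`, since a common root would propagate along edges and, at a vertex
whose deletion keeps `G[W]` connected, contradict the induction hypothesis.

The edge recursion `m(G - ab) = m(G) + m(G - a - b)` then shows that above `t(G)` deleting an edge
never decreases `m` and never increases `t`; for connected `G` the increase is strict, because
`t(G - a - b) ≤ t(G - a) < t(G)`. Deleting the edges of `G` missing from `H` one at a time, first
from the connected graph `G`, gives `m(H, x) > m(G, x)` for `x ≥ t(G)`, and evaluating at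
`x = t(H)` gives `t(H) < t(G)`.
-/

open Finset
open scoped Classical

namespace SimpleGraph

variable {V : Type*} (G : SimpleGraph V)

def IsMatchingOn (W : Finset V) (M : Finset (Sym2 V)) : Prop :=
  M ⊆ W.sym2 ∧ (∀ e ∈ M, e ∈ G.edgeSet) ∧
    (M : Set (Sym2 V)).Pairwise fun e f => ∀ x ∈ e, x ∉ f

noncomputable def matchingsOn (W : Finset V) : Finset (Finset (Sym2 V)) :=
  W.sym2.powerset.filter (G.IsMatchingOn W)

/-- `m(G[W], x)`: induced subgraphs are encoded by their vertex sets in the fixed type `V` rather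
than as graphs on subtypes. -/
noncomputable def matchPolyOn (W : Finset V) (x : ℝ) : ℝ :=
  ∑ M ∈ G.matchingsOn W, (-1) ^ M.card * x ^ (W.card - 2 * M.card)

variable {G} {W : Finset V} {M : Finset (Sym2 V)}

lemma mem_matchingsOn : M ∈ G.matchingsOn W ↔ G.IsMatchingOn W M := by
  simp only [matchingsOn, mem_filter, mem_powerset, and_iff_right_iff_imp]
  exact fun h => h.1

lemma IsMatchingOn.two_mul_card_le (h : G.IsMatchingOn W M) : 2 * M.card ≤ W.card :=
  calc 2 * M.card = ∑ e ∈ M, e.toFinset.card := by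
        rw [sum_congr rfl fun e he =>
          Sym2.card_toFinset_of_not_isDiag e (G.not_isDiag_of_mem_edgeSet (h.2.1 e he)),
          sum_const, smul_eq_mul, mul_comm]
    _ = (M.biUnion Sym2.toFinset).card := by
        refine (card_biUnion fun e he f hf hef => ?_).symm
        exact Finset.disjoint_left.2 fun x hxe hxf =>
          h.2.2 he hf hef x (Sym2.mem_toFinset.1 hxe) (Sym2.mem_toFinset.1 hxf)
    _ ≤ W.card := card_le_card <| biUnion_subset.2 fun e he x hx =>
        mem_sym2_iff.1 (h.1 he) x (Sym2.mem_toFinset.1 hx)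

lemma matchPolyOn_empty (x : ℝ) : G.matchPolyOn ∅ x = 1 := by
  have : G.IsMatchingOn ∅ ∅ := by simp [IsMatchingOn]
  simp [matchPolyOn, matchingsOn, filter_singleton, if_pos this]

lemma isMatchingOn_erase_iff {u : V} :
    G.IsMatchingOn (W.erase u) M ↔ G.IsMatchingOn W M ∧ ∀ e ∈ M, u ∉ e := by
  simp only [IsMatchingOn, subset_iff, mem_sym2_iff, mem_erase]
  constructor
  · rintro ⟨hW, hG, hM⟩
    exact ⟨⟨fun e he x hx => (hW he x hx).2, hG, hM⟩, fun e he hue => (hW he u hue).1 rfl⟩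
  · rintro ⟨⟨hW, hG, hM⟩, hu⟩
    exact ⟨fun e he x hx => ⟨fun hxu => hu e he (hxu ▸ hx), hW he x hx⟩, hG, hM⟩

lemma isMatchingOn_insert_iff {u v : V} (he : s(u, v) ∉ M) :
    G.IsMatchingOn W (insert s(u, v) M) ↔
      G.Adj u v ∧ u ∈ W ∧ v ∈ W ∧ G.IsMatchingOn ((W.erase u).erase v) M := by
  rw [isMatchingOn_erase_iff, isMatchingOn_erase_iff, IsMatchingOn, IsMatchingOn, coe_insert,
    Set.pairwise_insert_of_notMem (mem_coe.not.2 he)]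
  simp only [insert_subset_iff, mem_sym2_iff, Sym2.mem_iff, forall_eq_or_imp,
    forall_eq, forall_mem_insert, mem_edgeSet, mem_coe]
  constructor
  · rintro ⟨⟨⟨hu, hv⟩, hW⟩, ⟨huv, hG⟩, hM, hfree⟩
    exact ⟨huv, hu, hv, ⟨⟨hW, hG, hM⟩, fun f hf => (hfree f hf).1.1⟩,
      fun f hf => (hfree f hf).1.2⟩
  · rintro ⟨huv, hu, hv, ⟨⟨hW, hG, hM⟩, hufree⟩, hvfree⟩
    refine ⟨⟨⟨hu, hv⟩, hW⟩, ⟨huv, hG⟩, hM,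
      fun f hf => ⟨⟨hufree f hf, hvfree f hf⟩, ?_⟩⟩
    rintro x hx (rfl | rfl)
    exacts [hufree f hf hx, hvfree f hf hx]

lemma sum_matchingsOn_filter_mem {u v : V} (huv : G.Adj u v) (hu : u ∈ W) (hv : v ∈ W)
    (x : ℝ) :
    ∑ M ∈ (G.matchingsOn W).filter (s(u, v) ∈ ·),
        (-1 : ℝ) ^ M.card * x ^ (W.card - 2 * M.card) =
      -G.matchPolyOn ((W.erase u).erase v) x := by
  have hfree : ∀ M ∈ G.matchingsOn ((W.erase u).erase v), s(u, v) ∉ M := fun M hM he => by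
    simpa using mem_sym2_iff.1 ((mem_matchingsOn.1 hM).1 he) u (Sym2.mem_mk_left u v)
  have himage : (G.matchingsOn W).filter (s(u, v) ∈ ·) =
      (G.matchingsOn ((W.erase u).erase v)).image (insert s(u, v)) := by
    ext M
    simp only [mem_filter, mem_image]
    constructor
    · rintro ⟨hM, he⟩
      rw [mem_matchingsOn, ← insert_erase he, isMatchingOn_insert_iff (notMem_erase _ _)] at hM
      exact ⟨M.erase s(u, v), mem_matchingsOn.2 hM.2.2.2, insert_erase he⟩
    · rintro ⟨M', hM', rfl⟩
      refine ⟨mem_matchingsOn.2 ?_, mem_insert_self _ _⟩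
      exact (isMatchingOn_insert_iff (hfree M' hM')).2 ⟨huv, hu, hv, mem_matchingsOn.1 hM'⟩
  have hcard : ((W.erase u).erase v).card = W.card - 2 := by
    rw [card_erase_of_mem (mem_erase.2 ⟨huv.ne', hv⟩), card_erase_of_mem hu]; rfl
  rw [himage, sum_image, matchPolyOn, ← sum_neg_distrib, hcard]
  · refine sum_congr rfl fun M hM => ?_
    rw [card_insert_of_notMem (hfree M hM), pow_succ, Nat.mul_succ, Nat.sub_add_eq,
      Nat.sub_right_comm]
    ring
  · intro M hM M' hM' h
    rw [← erase_insert (hfree M hM), h, erase_insert (hfree M' hM')]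

theorem matchPolyOn_eq_sub_sum {u : V} (hu : u ∈ W) (x : ℝ) :
    G.matchPolyOn W x = x * G.matchPolyOn (W.erase u) x -
      ∑ v ∈ (W.erase u).filter (G.Adj u), G.matchPolyOn ((W.erase u).erase v) x := by
  have huncovered : (G.matchingsOn W).filter (fun M => ∀ e ∈ M, u ∉ e) =
      G.matchingsOn (W.erase u) := by
    ext M
    simp only [mem_filter, mem_matchingsOn, isMatchingOn_erase_iff]
  have hcovered : (G.matchingsOn W).filter (fun M => ¬∀ e ∈ M, u ∉ e) =
      ((W.erase u).filter (G.Adj u)).biUnion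
        fun v => (G.matchingsOn W).filter (s(u, v) ∈ ·) := by
    ext M
    simp only [mem_filter, mem_biUnion, mem_erase, not_forall, not_not]
    constructor
    · rintro ⟨hM, e, he, hue⟩
      obtain ⟨v, rfl⟩ := Sym2.mem_iff_exists.1 hue
      have huv : G.Adj u v := (mem_matchingsOn.1 hM).2.1 _ he
      exact ⟨v, ⟨⟨huv.ne', mem_sym2_iff.1 ((mem_matchingsOn.1 hM).1 he) v
        (Sym2.mem_mk_right u v)⟩, huv⟩, hM, he⟩
    · rintro ⟨v, -, hM, he⟩
      exact ⟨hM, _, he, Sym2.mem_mk_left u v⟩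
  have hdisj : ((W.erase u).filter (G.Adj u) : Set V).PairwiseDisjoint
      fun v => (G.matchingsOn W).filter (s(u, v) ∈ ·) := by
    intro v _ v' _ hvv'
    refine disjoint_filter.2 fun M hM hv hv' => ?_
    exact (mem_matchingsOn.1 hM).2.2 hv hv' (fun h => hvv' (Sym2.congr_right.1 h)) u
      (Sym2.mem_mk_left u v) (Sym2.mem_mk_left u v')
  rw [matchPolyOn, ← sum_filter_add_sum_filter_not _ (fun M => ∀ e ∈ M, u ∉ e), huncovered,
    hcovered, sum_biUnion hdisj, matchPolyOn, mul_sum, sub_eq_add_neg, ← sum_neg_distrib]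
  congr 1
  · refine sum_congr rfl fun M hM => ?_
    have := (mem_matchingsOn.1 hM).two_mul_card_le
    rw [card_erase_of_mem hu] at this ⊢
    have hW := card_pos.2 ⟨u, hu⟩
    rw [show W.card - 2 * M.card = W.card - 1 - 2 * M.card + 1 by omega, pow_succ]
    ring
  · refine sum_congr rfl fun v hv => ?_
    obtain ⟨hvu, huv⟩ := mem_filter.1 hv
    exact sum_matchingsOn_filter_mem huv hu (mem_of_mem_erase hvu) x

lemma matchPolyOn_congr {G' : SimpleGraph V}
    (h : ∀ a ∈ W, ∀ b ∈ W, G.Adj a b ↔ G'.Adj a b) :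
    G.matchPolyOn W = G'.matchPolyOn W := by
  have : G.matchingsOn W = G'.matchingsOn W := by
    refine filter_congr fun M hM => ?_
    simp only [IsMatchingOn, mem_powerset.1 hM, true_and]
    refine and_congr_left' (forall₂_congr fun e he => ?_)
    have hW := mem_sym2_iff.1 (mem_powerset.1 hM he)
    induction e using Sym2.ind with
    | _ a b => exact h a (hW a (Sym2.mem_mk_left a b)) b (hW b (Sym2.mem_mk_right a b))
  ext x
  rw [matchPolyOn, matchPolyOn, this]

theorem matchPolyOn_deleteEdges {a b : V} (hab : G.Adj a b) (ha : a ∈ W) (hb : b ∈ W)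
    (x : ℝ) :
    (G.deleteEdges {s(a, b)}).matchPolyOn W x =
      G.matchPolyOn W x + G.matchPolyOn ((W.erase a).erase b) x := by
  set G' := G.deleteEdges {s(a, b)}
  have hoff : ∀ T : Finset V, a ∉ T → G'.matchPolyOn T = G.matchPolyOn T := fun T hT =>
    matchPolyOn_congr fun p hp q hq => by
      simp [G', deleteEdges_adj, ne_of_mem_of_not_mem hp hT, ne_of_mem_of_not_mem hq hT]
  have hnbr : (W.erase a).filter (G'.Adj a) = ((W.erase a).filter (G.Adj a)).erase b := by
    ext v
    simp only [G', mem_filter, mem_erase, deleteEdges_adj, Set.mem_singleton_iff,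
      Sym2.congr_right]
    tauto
  have hb' : b ∈ (W.erase a).filter (G.Adj a) :=
    mem_filter.2 ⟨mem_erase.2 ⟨hab.ne', hb⟩, hab⟩
  -- Expanding both sides at `a`, only the term `v = b` differs.
  rw [matchPolyOn_eq_sub_sum (G := G') ha, matchPolyOn_eq_sub_sum (G := G) ha,
    filter_congr_decidable, hnbr, hoff _ (notMem_erase a W),
    sum_congr rfl fun v hv => congrFun (hoff _ fun h => notMem_erase a W (mem_of_mem_erase h)) x,
    ← sum_erase_add _ _ hb']
  ring

theorem matchPolyOn_union {A B : Finset V} (hAB : Disjoint A B)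
    (h : ∀ a ∈ A, ∀ b ∈ B, ¬G.Adj a b) (x : ℝ) :
    G.matchPolyOn (A ∪ B) x = G.matchPolyOn A x * G.matchPolyOn B x := by
  induction A using Finset.strongInduction with
  | H A ih =>
  obtain rfl | ⟨u, hu⟩ := A.eq_empty_or_nonempty
  · rw [empty_union, matchPolyOn_empty, one_mul]
  have hnotB : ∀ v ∈ A, v ∉ B := fun v hv => Finset.disjoint_left.1 hAB hv
  have herase : ∀ {T : Finset V} {v : V}, v ∈ A → (T ∪ B).erase v = T.erase v ∪ B :=
    fun hv => by rw [erase_union_distrib, erase_eq_of_notMem (hnotB _ hv)]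
  have hnbr : ((A.erase u) ∪ B).filter (G.Adj u) = (A.erase u).filter (G.Adj u) := by
    rw [filter_union, filter_false_of_mem fun b hb => h u hu b hb, union_empty]
  have ih' : ∀ T ⊆ A.erase u,
      G.matchPolyOn (T ∪ B) x = G.matchPolyOn T x * G.matchPolyOn B x :=
    fun T hT => ih T (hT.trans_ssubset (erase_ssubset hu))
      (hAB.mono_left (hT.trans (erase_subset u A)))
      fun a ha => h a (mem_of_mem_erase (hT ha))
  rw [matchPolyOn_eq_sub_sum (mem_union_left B hu), matchPolyOn_eq_sub_sum hu, herase hu, hnbr,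
    ih' _ subset_rfl, sum_congr rfl fun v hv => by
      rw [herase (mem_of_mem_erase (mem_of_mem_filter v hv)), ih' _ (erase_subset v _)],
    ← sum_mul]
  ring

variable (G) in
noncomputable def maxRootOn (W : Finset V) : ℝ :=
  sSup {x | G.matchPolyOn W x = 0}

lemma continuous_matchPolyOn : Continuous (G.matchPolyOn W) := by
  unfold matchPolyOn
  fun_prop

lemma matchPolyOn_pos_of_card_le {x : ℝ} (hx : ((G.matchingsOn W).card : ℝ) ≤ x) :
    0 < G.matchPolyOn W x := by
  have hempty : ∅ ∈ G.matchingsOn W := mem_matchingsOn.2 (by simp [IsMatchingOn])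
  have hN : (1 : ℝ) ≤ (G.matchingsOn W).card := by exact_mod_cast card_pos.2 ⟨∅, hempty⟩
  have hx1 : 1 ≤ x := hN.trans hx
  -- Each non-empty matching contributes at least `-x ^ (n - 2)`, so
  -- `x ^ 2 * m(x) ≥ x ^ n * (x ^ 2 - N + 1)` with `N` the number of matchings.
  have hterm : ∀ M ∈ (G.matchingsOn W).erase ∅,
      -x ^ W.card ≤ x ^ 2 * ((-1) ^ M.card * x ^ (W.card - 2 * M.card)) := by
    intro M hM
    obtain ⟨hne, hM⟩ := mem_erase.1 hM
    have h2 := (mem_matchingsOn.1 hM).two_mul_card_le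
    have h1 := card_pos.2 (nonempty_iff_ne_empty.2 hne)
    have hle : x ^ 2 * x ^ (W.card - 2 * M.card) ≤ x ^ W.card := by
      rw [← pow_add]
      exact pow_le_pow_right₀ hx1 (by omega)
    have hpos : 0 ≤ x ^ 2 * x ^ (W.card - 2 * M.card) := by positivity
    rcases neg_one_pow_eq_or ℝ M.card with h | h <;> rw [h] <;> linarith
  have hsum := card_nsmul_le_sum _ _ _ hterm
  rw [card_erase_of_mem hempty, nsmul_eq_mul, ← mul_sum,
    Nat.cast_pred (card_pos.2 ⟨∅, hempty⟩)] at hsum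
  rw [matchPolyOn, ← add_sum_erase _ _ hempty]
  simp only [card_empty, pow_zero, mul_zero, Nat.sub_zero, one_mul]
  have hquad : 0 < x ^ W.card * (x ^ 2 - (G.matchingsOn W).card + 1) :=
    mul_pos (by positivity) (by nlinarith)
  exact pos_of_mul_pos_right (a := x ^ 2) (by linarith) (by positivity)

lemma exists_root_ge {x : ℝ} (hx : G.matchPolyOn W x ≤ 0) :
    ∃ r, x ≤ r ∧ G.matchPolyOn W r = 0 := by
  obtain ⟨r, hr, hr0⟩ := intermediate_value_Icc (le_max_left x (G.matchingsOn W).card)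
    continuous_matchPolyOn.continuousOn
    ⟨hx, (matchPolyOn_pos_of_card_le (le_max_right _ _)).le⟩
  exact ⟨r, hr.1, hr0⟩

lemma bddAbove_roots_matchPolyOn : BddAbove {x | G.matchPolyOn W x = 0} :=
  ⟨(G.matchingsOn W).card, fun _ hx =>
    not_lt.1 fun h => (matchPolyOn_pos_of_card_le h.le).ne' hx⟩

lemma le_maxRootOn {r : ℝ} (hr : G.matchPolyOn W r = 0) : r ≤ G.maxRootOn W :=
  le_csSup bddAbove_roots_matchPolyOn hr

lemma matchPolyOn_maxRootOn_of_eq_zero {r : ℝ} (hr : G.matchPolyOn W r = 0) :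
    G.matchPolyOn W (G.maxRootOn W) = 0 :=
  IsClosed.csSup_mem (isClosed_eq continuous_matchPolyOn continuous_const) ⟨r, hr⟩
    bddAbove_roots_matchPolyOn

lemma matchPolyOn_pos_of_maxRootOn_lt {x : ℝ} (hx : G.maxRootOn W < x) :
    0 < G.matchPolyOn W x := by
  by_contra! h
  obtain ⟨r, hxr, hr⟩ := exists_root_ge h
  linarith [le_maxRootOn hr]

lemma matchPolyOn_nonneg_of_maxRootOn_le {x : ℝ} (hx : G.maxRootOn W ≤ x) :
    0 ≤ G.matchPolyOn W x := by
  by_contra! h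
  obtain ⟨r, hxr, hr⟩ := exists_root_ge h.le
  obtain rfl : r = x := by linarith [le_maxRootOn hr]
  exact h.ne hr

lemma maxRootOn_empty : G.maxRootOn ∅ = 0 := by
  simp [maxRootOn, matchPolyOn_empty]

/-- At `θ = t(G[W - u])` the vertex recursion makes `m(G[W], θ) ≤ 0`, so `m(G[W])` has a root
`≥ θ`. -/
theorem exists_root_and_maxRootOn_erase_le (W : Finset V) :
    (W.Nonempty → ∃ r, G.matchPolyOn W r = 0) ∧
      ∀ u ∈ W, G.maxRootOn (W.erase u) ≤ G.maxRootOn W := by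
  induction W using Finset.strongInduction with
  | H W ih =>
  have key : ∀ u ∈ W, ∃ r, G.maxRootOn (W.erase u) ≤ r ∧ G.matchPolyOn W r = 0 := by
    intro u hu
    obtain ⟨ih_root, ih_le⟩ := ih _ (erase_ssubset hu)
    apply exists_root_ge
    have hθ : G.maxRootOn (W.erase u) *
        G.matchPolyOn (W.erase u) (G.maxRootOn (W.erase u)) = 0 := by
      obtain h | h := (W.erase u).eq_empty_or_nonempty
      · rw [h, maxRootOn_empty, zero_mul]
      · obtain ⟨r, hr⟩ := ih_root h
        exact mul_eq_zero_of_right _ (matchPolyOn_maxRootOn_of_eq_zero hr)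
    rw [matchPolyOn_eq_sub_sum hu, hθ, zero_sub, neg_nonpos]
    exact sum_nonneg fun v hv => matchPolyOn_nonneg_of_maxRootOn_le (ih_le v (mem_filter.1 hv).1)
  refine ⟨fun ⟨u, hu⟩ => (key u hu).imp fun _ => And.right, fun u hu => ?_⟩
  obtain ⟨r, hle, hr⟩ := key u hu
  exact hle.trans (le_maxRootOn hr)

lemma matchPolyOn_maxRootOn (hW : W.Nonempty) : G.matchPolyOn W (G.maxRootOn W) = 0 :=
  let ⟨_, hr⟩ := (exists_root_and_maxRootOn_erase_le W).1 hW
  matchPolyOn_maxRootOn_of_eq_zero hr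

lemma maxRootOn_erase_le {u : V} (hu : u ∈ W) : G.maxRootOn (W.erase u) ≤ G.maxRootOn W :=
  (exists_root_and_maxRootOn_erase_le W).2 u hu

lemma maxRootOn_mono {T : Finset V} (h : T ⊆ W) : G.maxRootOn T ≤ G.maxRootOn W := by
  induction W using Finset.strongInduction with
  | H W ih =>
  obtain rfl | hTW := h.eq_or_ssubset
  · rfl
  obtain ⟨u, huW, huT⟩ := exists_of_ssubset hTW
  exact (ih _ (erase_ssubset huW) (subset_erase.2 ⟨h, huT⟩)).trans (maxRootOn_erase_le huW)

variable (G) in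
def induceOn (W : Finset V) : SimpleGraph V where
  Adj a b := G.Adj a b ∧ a ∈ W ∧ b ∈ W
  symm := ⟨fun _ _ h => ⟨h.1.symm, h.2.2, h.2.1⟩⟩
  loopless := ⟨fun _ h => h.1.ne rfl⟩

variable (G) in
def ConnectedOn (W : Finset V) : Prop :=
  ∀ a ∈ W, ∀ b ∈ W, (G.induceOn W).Reachable a b

variable (G) in
noncomputable def componentOn (W : Finset V) (v : V) : Finset V :=
  W.filter ((G.induceOn W).Reachable v)

lemma componentOn_subset {v : V} : G.componentOn W v ⊆ W := filter_subset _ _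

lemma mem_componentOn_self {v : V} (hv : v ∈ W) : v ∈ G.componentOn W v :=
  mem_filter.2 ⟨hv, Reachable.refl v⟩

lemma not_adj_componentOn {v a b : V} (ha : a ∈ G.componentOn W v)
    (hb : b ∈ W \ G.componentOn W v) : ¬G.Adj a b := fun hab => by
  obtain ⟨haW, hva⟩ := mem_filter.1 ha
  obtain ⟨hbW, hb⟩ := mem_sdiff.1 hb
  exact hb (mem_filter.2 ⟨hbW, hva.trans (Adj.reachable ⟨hab, haW, hbW⟩)⟩)

lemma matchPolyOn_eq_componentOn_mul {v : V} (x : ℝ) :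
    G.matchPolyOn W x =
      G.matchPolyOn (G.componentOn W v) x * G.matchPolyOn (W \ G.componentOn W v) x := by
  rw [← matchPolyOn_union disjoint_sdiff fun a ha b hb => not_adj_componentOn ha hb,
    union_sdiff_of_subset componentOn_subset]

lemma connectedOn_componentOn {v : V} : G.ConnectedOn (G.componentOn W v) := by
  have key : ∀ a, (G.induceOn W).Reachable v a →
      (G.induceOn (G.componentOn W v)).Reachable v a := by
    intro a hva
    induction (reachable_iff_reflTransGen v a).1 hva with
    | refl => rfl
    | tail hvb hbc ih =>
      have hvb' := (reachable_iff_reflTransGen _ _).2 hvb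
      refine (ih hvb').trans (Adj.reachable ⟨hbc.1, ?_, ?_⟩)
      · exact mem_filter.2 ⟨hbc.2.1, hvb'⟩
      · exact mem_filter.2 ⟨hbc.2.2, hvb'.trans hbc.reachable⟩
  intro a ha b hb
  exact (key a (mem_filter.1 ha).2).symm.trans (key b (mem_filter.1 hb).2)

lemma ConnectedOn.exists_adj (h : G.ConnectedOn W) (hW : W.Nontrivial) {u : V} (hu : u ∈ W) :
    ∃ v ∈ W, G.Adj u v := by
  obtain ⟨v, hv, hvu⟩ := hW.exists_ne u
  obtain ⟨p⟩ := h u hu v hv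
  cases p with
  | nil => exact absurd rfl hvu
  | cons hadj _ => exact ⟨_, hadj.2.2, hadj.1⟩

/-- A vertex farthest from some `r` is not a cut vertex: a shortest walk from `r` to any other
vertex avoids it. -/
theorem ConnectedOn.exists_connectedOn_erase (h : G.ConnectedOn W) (hW : W.Nonempty) :
    ∃ u ∈ W, G.ConnectedOn (W.erase u) := by
  obtain ⟨r, hr⟩ := hW
  obtain ⟨u, hu, hfar⟩ := W.exists_max_image ((G.induceOn W).dist r) ⟨r, hr⟩
  have key : ∀ a ∈ W.erase u, (G.induceOn (W.erase u)).Reachable r a := by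
    intro a ha
    obtain ⟨hau, haW⟩ := mem_erase.1 ha
    obtain ⟨p, hp⟩ := (h r hr a haW).exists_walk_length_eq_dist
    have hup : u ∉ p.support := fun hu' => by
      have h1 := dist_le (p.takeUntil u hu')
      have h2 := congrArg Walk.length (p.take_spec hu')
      have h3 : (p.dropUntil u hu').length ≠ 0 := fun h0 =>
        hau (Walk.eq_of_length_eq_zero h0).symm
      rw [Walk.length_append] at h2
      have := hfar a haW
      omega
    refine ⟨p.transfer _ fun e he => ?_⟩
    induction e using Sym2.ind with
    | _ x y =>
      have hxy := p.adj_of_mem_edges he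
      have hx : x ≠ u := fun hx => hup (hx ▸ p.fst_mem_support_of_mem_edges he)
      have hy : y ≠ u := fun hy => hup (hy ▸ p.snd_mem_support_of_mem_edges he)
      exact ⟨hxy.1, mem_erase.2 ⟨hx, hxy.2.1⟩, mem_erase.2 ⟨hy, hxy.2.2⟩⟩
  exact ⟨u, hu, fun a ha b hb => (key a ha).symm.trans (key b hb)⟩

lemma matchPolyOn_erase_erase_eq_zero {θ : ℝ} (hθ : G.maxRootOn W ≤ θ)
    (hW : G.matchPolyOn W θ = 0) {v w : V} (hv : v ∈ W) (hv0 : G.matchPolyOn (W.erase v) θ = 0)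
    (hw : w ∈ W.erase v) (hvw : G.Adj v w) : G.matchPolyOn ((W.erase v).erase w) θ = 0 := by
  have hsum := matchPolyOn_eq_sub_sum (G := G) hv θ
  rw [hW, hv0, mul_zero, zero_sub, zero_eq_neg] at hsum
  refine (sum_eq_zero_iff_of_nonneg fun w' hw' => ?_).1 hsum w (mem_filter.2 ⟨hw, hvw⟩)
  exact matchPolyOn_nonneg_of_maxRootOn_le
    (((maxRootOn_erase_le (mem_filter.1 hw').1).trans (maxRootOn_erase_le hv)).trans hθ)

/-- In `W - w`, the factor of `m(G[W - v - w])` coming from the component of `v` does not vanish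
at `t(G[W])` by `hind`, so the other factor, which also divides `m(G[W - w])`, does. -/
lemma matchPolyOn_erase_eq_zero_of_adj
    (hind : ∀ D ⊂ W, G.ConnectedOn D → D.Nontrivial →
      ∀ v ∈ D, 0 < G.matchPolyOn (D.erase v) (G.maxRootOn D))
    {v w : V} (hv : v ∈ W)
    (hv0 : G.matchPolyOn (W.erase v) (G.maxRootOn W) = 0) (hw : w ∈ W) (hvw : G.Adj v w) :
    G.matchPolyOn (W.erase w) (G.maxRootOn W) = 0 := by
  set θ := G.maxRootOn W
  set D := G.componentOn (W.erase w) v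
  have hvS : v ∈ W.erase w := mem_erase.2 ⟨hvw.ne, hv⟩
  have hvD : v ∈ D := mem_componentOn_self hvS
  have hDS : D ⊆ W.erase w := componentOn_subset
  have hsplit : G.matchPolyOn ((W.erase w).erase v) θ =
      G.matchPolyOn (D.erase v) θ * G.matchPolyOn (W.erase w \ D) θ := by
    rw [← matchPolyOn_union (disjoint_sdiff.mono_left (erase_subset v D))
      fun a ha b hb => not_adj_componentOn (mem_of_mem_erase ha) hb,
      ← erase_eq_of_notMem fun h => (mem_sdiff.1 h).2 hvD, ← erase_union_distrib,
      union_sdiff_of_subset hDS]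
  have h0 : G.matchPolyOn ((W.erase w).erase v) θ = 0 := by
    rw [erase_right_comm]
    exact matchPolyOn_erase_erase_eq_zero le_rfl (matchPolyOn_maxRootOn ⟨v, hv⟩) hv hv0
      (mem_erase.2 ⟨hvw.ne', hw⟩) hvw
  rcases mul_eq_zero.1 (hsplit ▸ h0) with hD | hrest
  · exfalso
    have hDne : (D.erase v).Nonempty := by
      by_contra! h
      rw [h, matchPolyOn_empty] at hD
      exact one_ne_zero hD
    have hDθ : G.maxRootOn D = θ := le_antisymm
      ((maxRootOn_mono hDS).trans (maxRootOn_erase_le hw))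
      ((le_maxRootOn hD).trans (maxRootOn_erase_le hvD))
    have := hind D (hDS.trans_ssubset (erase_ssubset hw)) connectedOn_componentOn
      ((erase_nonempty hvD).1 hDne) v hvD
    rw [hDθ, hD] at this
    exact this.false
  · rw [matchPolyOn_eq_componentOn_mul (v := v), hrest, mul_zero]

lemma matchPolyOn_erase_eq_zero_of_reachable
    (hind : ∀ D ⊂ W, G.ConnectedOn D → D.Nontrivial →
      ∀ v ∈ D, 0 < G.matchPolyOn (D.erase v) (G.maxRootOn D))
    {u z : V} (hu : u ∈ W)
    (hu0 : G.matchPolyOn (W.erase u) (G.maxRootOn W) = 0) (huz : (G.induceOn W).Reachable u z) :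
    G.matchPolyOn (W.erase z) (G.maxRootOn W) = 0 := by
  obtain ⟨p⟩ := huz
  induction p with
  | nil => exact hu0
  | cons hadj _ ih =>
    exact ih hadj.2.2 (matchPolyOn_erase_eq_zero_of_adj hind hu hu0 hadj.2.2 hadj.1)

/-- Otherwise `t(G[W])` is a root of every `m(G[W - z])`; at a non-cut vertex `z` with a
neighbour `c` this contradicts the induction hypothesis for `W - z` at `c`. -/
theorem matchPolyOn_erase_maxRootOn_pos (h : G.ConnectedOn W) (hW : W.Nontrivial) {u : V}
    (hu : u ∈ W) : 0 < G.matchPolyOn (W.erase u) (G.maxRootOn W) := by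
  induction W using Finset.strongInduction generalizing u with
  | H W ih =>
  refine (matchPolyOn_nonneg_of_maxRootOn_le (maxRootOn_erase_le hu)).lt_of_ne' fun hu0 => ?_
  have hind : ∀ D ⊂ W, G.ConnectedOn D → D.Nontrivial →
      ∀ v ∈ D, 0 < G.matchPolyOn (D.erase v) (G.maxRootOn D) :=
    fun D hD hDc hDn v hv => ih D hD hDc hDn hv
  obtain ⟨z, hz, hzc⟩ := h.exists_connectedOn_erase ⟨u, hu⟩
  have hz0 := matchPolyOn_erase_eq_zero_of_reachable hind hu hu0 (h u hu z hz)
  obtain ⟨c, hc, hzc'⟩ := h.exists_adj hW hz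
  have hcz : c ∈ W.erase z := mem_erase.2 ⟨hzc'.ne', hc⟩
  have hc0 :=
    matchPolyOn_erase_erase_eq_zero le_rfl (matchPolyOn_maxRootOn ⟨z, hz⟩) hz hz0 hcz hzc'
  have hθ : G.maxRootOn (W.erase z) = G.maxRootOn W :=
    le_antisymm (maxRootOn_erase_le hz) (le_maxRootOn hz0)
  obtain hempty | hne := ((W.erase z).erase c).eq_empty_or_nonempty
  · rw [hempty, matchPolyOn_empty] at hc0
    exact one_ne_zero hc0
  · have := ih (W.erase z) (erase_ssubset hz) hzc ((erase_nonempty hcz).1 hne) hcz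
    rw [hθ, hc0] at this
    exact this.false

theorem maxRootOn_erase_lt (h : G.ConnectedOn W) (hW : W.Nontrivial) {u : V} (hu : u ∈ W) :
    G.maxRootOn (W.erase u) < G.maxRootOn W := by
  refine (maxRootOn_erase_le hu).lt_of_ne fun heq => ?_
  have := matchPolyOn_erase_maxRootOn_pos h hW hu
  rw [← heq, matchPolyOn_maxRootOn ((erase_nonempty hu).2 hW)] at this
  exact this.false

lemma maxRootOn_le_of_forall_le {G' : SimpleGraph V} (hW : W.Nonempty)
    (h : ∀ x, G.maxRootOn W ≤ x → G.matchPolyOn W x ≤ G'.matchPolyOn W x) :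
    G'.maxRootOn W ≤ G.maxRootOn W := by
  by_contra! hlt
  have := h _ hlt.le
  rw [matchPolyOn_maxRootOn hW] at this
  linarith [matchPolyOn_pos_of_maxRootOn_lt hlt]

lemma maxRootOn_lt_of_forall_lt {G' : SimpleGraph V} (hW : W.Nonempty)
    (h : ∀ x, G.maxRootOn W ≤ x → G.matchPolyOn W x < G'.matchPolyOn W x) :
    G'.maxRootOn W < G.maxRootOn W := by
  by_contra! hle
  have := h _ hle
  rw [matchPolyOn_maxRootOn hW] at this
  linarith [matchPolyOn_nonneg_of_maxRootOn_le hle]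

lemma exists_adj_le_deleteEdges_of_lt {H : SimpleGraph V} (h : H < G) :
    ∃ a b, G.Adj a b ∧ H ≤ G.deleteEdges {s(a, b)} := by
  obtain ⟨e, heG, heH⟩ := Set.exists_of_ssubset (edgeSet_ssubset_edgeSet.2 h)
  induction e using Sym2.ind with
  | _ a b =>
  refine ⟨a, b, heG, ?_⟩
  rw [← edgeSet_subset_edgeSet, edgeSet_deleteEdges]
  exact fun f hf => ⟨edgeSet_subset_edgeSet.2 h.le hf, fun hfe => heH (hfe ▸ hf)⟩

section Fintype

variable [Fintype V]

lemma matchingCount_eq_card_filter (k : ℕ) :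
    matchingCount G k = ((G.matchingsOn univ).filter (·.card = k)).card := by
  rw [matchingCount, Nat.card_eq_fintype_card, Fintype.card_subtype]
  congr 1
  ext M
  simp only [mem_filter, mem_univ, true_and, mem_matchingsOn, IsMatchingOn, sym2_univ,
    subset_univ]
  tauto

lemma eval_matchPoly (x : ℝ) : (matchPoly G).eval x = G.matchPolyOn univ x := by
  have hmaps : ∀ M ∈ G.matchingsOn univ, M.card ∈ range (Fintype.card V + 1) := fun M hM => by
    have := (mem_matchingsOn.1 hM).two_mul_card_le
    rw [card_univ] at this
    exact mem_range.2 (by omega)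
  rw [matchPoly, eval_finsetSum, matchPolyOn, ← sum_fiberwise_of_maps_to hmaps]
  refine sum_congr rfl fun k _ => ?_
  rw [sum_congr rfl fun M hM => by rw [(mem_filter.1 hM).2], sum_const, nsmul_eq_mul,
    matchingCount_eq_card_filter, card_univ]
  simp only [eval_mul, eval_C, eval_pow, eval_X]
  ring

lemma maxRoot_eq_maxRootOn : maxRoot G = G.maxRootOn univ := by
  simp only [maxRoot, maxRootOn, eval_matchPoly]

lemma connectedOn_univ (hG : G.Connected) : G.ConnectedOn univ :=
  fun a _ b _ => (hG a b).mono fun x y h => ⟨h, mem_univ x, mem_univ y⟩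

theorem matchPolyOn_univ_le_of_le {H : SimpleGraph V} (hHG : H ≤ G) :
    H.maxRootOn univ ≤ G.maxRootOn univ ∧
      ∀ x, G.maxRootOn univ ≤ x → G.matchPolyOn univ x ≤ H.matchPolyOn univ x := by
  induction G using WellFoundedLT.induction with
  | _ G ih =>
  obtain rfl | hlt := hHG.eq_or_lt
  · exact ⟨le_rfl, fun _ _ => le_rfl⟩
  obtain ⟨a, b, hab, hHG'⟩ := exists_adj_le_deleteEdges_of_lt hlt
  have hstep : ∀ x, G.maxRootOn univ ≤ x →
      G.matchPolyOn univ x ≤ (G.deleteEdges {s(a, b)}).matchPolyOn univ x := fun x hx => by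
    rw [matchPolyOn_deleteEdges hab (mem_univ a) (mem_univ b), le_add_iff_nonneg_right]
    exact matchPolyOn_nonneg_of_maxRootOn_le ((maxRootOn_mono (subset_univ _)).trans hx)
  have hroot := maxRootOn_le_of_forall_le ⟨a, mem_univ a⟩ hstep
  have hdel : G.deleteEdges {s(a, b)} < G := (deleteEdges_le _).lt_of_ne fun h => by
    have hab' : s(a, b) ∈ G.edgeSet := hab
    rw [← h, edgeSet_deleteEdges] at hab'
    exact hab'.2 rfl
  obtain ⟨ih_root, ih_le⟩ := ih _ hdel hHG'
  exact ⟨ih_root.trans hroot, fun x hx => (hstep x hx).trans (ih_le x (hroot.trans hx))⟩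

theorem matchPolyOn_univ_lt_deleteEdges (hG : G.Connected) {a b : V} (hab : G.Adj a b) {x : ℝ}
    (hx : G.maxRootOn univ ≤ x) :
    G.matchPolyOn univ x < (G.deleteEdges {s(a, b)}).matchPolyOn univ x := by
  rw [matchPolyOn_deleteEdges hab (mem_univ a) (mem_univ b), lt_add_iff_pos_right]
  refine matchPolyOn_pos_of_maxRootOn_lt ?_
  calc G.maxRootOn ((univ.erase a).erase b)
      ≤ G.maxRootOn (univ.erase a) := maxRootOn_erase_le (mem_erase.2 ⟨hab.ne', mem_univ b⟩)
    _ < G.maxRootOn univ :=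
        maxRootOn_erase_lt (connectedOn_univ hG) ⟨a, mem_univ a, b, mem_univ b, hab.ne⟩
          (mem_univ a)
    _ ≤ x := hx

end Fintype

end SimpleGraph

open SimpleGraph

/-- If `G` is connected and `H` is a proper spanning subgraph of `G`, then `G ≻ H`:
`m(H,x) > m(G,x)` for all `x ≥ t(G)`; in particular `t(H) < t(G)`. -/
theorem gsucc_of_proper_spanning_subgraph_connected {V : Type*} [Fintype V]
    (G H : SimpleGraph V) (hG : G.Connected) (hHG : H ≤ G) (hne : H ≠ G) :
    (∀ x : ℝ, maxRoot G ≤ x → (matchPoly G).eval x < (matchPoly H).eval x) ∧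
      maxRoot H < maxRoot G := by
  obtain ⟨a, b, hab, hHG'⟩ := exists_adj_le_deleteEdges_of_lt (hHG.lt_of_ne hne)
  have hdel := matchPolyOn_univ_le_of_le (deleteEdges_le (G := G) {s(a, b)})
  have hlt : ∀ x, G.maxRootOn univ ≤ x → G.matchPolyOn univ x < H.matchPolyOn univ x :=
    fun x hx => (matchPolyOn_univ_lt_deleteEdges hG hab hx).trans_le
      ((matchPolyOn_univ_le_of_le hHG').2 x (hdel.1.trans hx))
  simp only [maxRoot_eq_maxRootOn, eval_matchPoly]
  exact ⟨hlt, maxRootOn_lt_of_forall_lt ⟨a, mem_univ a⟩ hlt⟩
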